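/- Let p be a prime, G a finite group, H ≤ G a subgroup satisfying H = ⟨T^H⟩ where T ∈ Syl_p(H). If K is any subnormal subgroup of G with T ≤ K, then H ≤ K. In particular, H is contained in the smallest subnormal subgroup of G containing T. -/

import Mathlib

/-!
`K ∩ H` is subnormal in `H` and contains `T`. In a subnormal series of `H` descending from `H`
to `K ∩ H`, every term contains `T` and is normal in its predecessor; by induction that
predecessor is `H`, so the term contains the normal closure of `T` in `H`, which is `H`.
-/

/-- `K` is a subnormal subgroup of `G`: there is a chain `K = c 0 ⊴ c 1 ⊴ ⋯ ⊴ c n = G`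
with each term normal in the next. -/
def IsSubnormal {G : Type*} [Group G] (K : Subgroup G) : Prop :=
  ∃ (n : ℕ) (c : ℕ → Subgroup G), c 0 = K ∧ c n = ⊤ ∧
    ∀ i < n, c i ≤ c (i + 1) ∧ ((c i).subgroupOf (c (i + 1))).Normal

theorem IsSubnormal.isSubnormal {G : Type*} [Group G] {K : Subgroup G} (hK : IsSubnormal K) :
    K.IsSubnormal := by
  obtain ⟨n, c, rfl, hcn, hchain⟩ := hK
  induction n generalizing c with
  | zero => exact hcn ▸ .top
  | succ n ih =>
    obtain ⟨hle, hnormal⟩ := hchain 0 n.succ_pos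
    exact .step _ _ hle (ih (fun i => c (i + 1)) hcn fun i hi => hchain (i + 1) (by omega))
      hnormal

namespace Subgroup

theorem IsSubnormal.eq_top_of_normalClosure_eq_top {G : Type*} [Group G]
    {K : Subgroup G} {s : Set G} (hK : K.IsSubnormal) (hs : normalClosure s = ⊤) (hsK : s ⊆ K) :
    K = ⊤ := by
  induction hK with
  | top => rfl
  | step J L hJL _ hnormal ih =>
    obtain rfl := ih (hsK.trans hJL)
    have : J.Normal := normalizer_eq_top_iff.mp <|
      top_le_iff.mp ((normal_subgroupOf_iff_le_normalizer hJL).mp hnormal)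
    exact top_le_iff.mp (hs ▸ normalClosure_le_normal hsK)

theorem IsSubnormal.le_of_normalClosure_eq_top {G : Type*} [Group G]
    {H K : Subgroup G} {s : Set H} (hK : K.IsSubnormal) (hs : normalClosure s = ⊤)
    (hsK : H.subtype '' s ⊆ K) : H ≤ K :=
  subgroupOf_eq_top.mp <|
    hK.subgroupOf.eq_top_of_normalClosure_eq_top hs fun x hx => hsK ⟨x, hx, rfl⟩

end Subgroup

theorem le_subnormal_of_normalClosure_eq_top_general {p : ℕ}
    {G : Type*} [Group G] (H : Subgroup G) (T : Sylow p H)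
    (hH : Subgroup.normalClosure ((T : Subgroup H) : Set H) = ⊤) :
    (∀ K : Subgroup G, IsSubnormal K → (T : Subgroup H).map H.subtype ≤ K → H ≤ K) ∧
    H ≤ ⨅ K ∈ {K : Subgroup G | IsSubnormal K ∧ (T : Subgroup H).map H.subtype ≤ K}, K := by
  have hle (K : Subgroup G) (hK : IsSubnormal K) (hTK : (T : Subgroup H).map H.subtype ≤ K) :
      H ≤ K :=
    hK.isSubnormal.le_of_normalClosure_eq_top hH hTK
  exact ⟨hle, le_iInf₂ fun K hK => hle K hK.1 hK.2⟩

/-- Let `H ≤ G` with `H = ⟨T^H⟩` for a Sylow `p`-subgroup `T` of `H`. Then `H` is contained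
in every subnormal subgroup of `G` containing `T`; in particular `H` is contained in the
smallest subnormal subgroup of `G` containing `T`. -/
theorem le_subnormal_of_normalClosure_eq_top {p : ℕ} (hp : p.Prime)
    {G : Type*} [Group G] [Finite G] (H : Subgroup G) (T : Sylow p H)
    (hH : Subgroup.normalClosure ((T : Subgroup H) : Set H) = ⊤) :
    (∀ K : Subgroup G, IsSubnormal K → (T : Subgroup H).map H.subtype ≤ K → H ≤ K) ∧
    H ≤ ⨅ K ∈ {K : Subgroup G | IsSubnormal K ∧ (T : Subgroup H).map H.subtype ≤ K}, K :=
  le_subnormal_of_normalClosure_eq_top_general H T hH
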